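/- arXiv:2310.04332 — 2 statements merged into one kernel-verified Lean document; each statement's English description precedes it below -/
import Mathlib

section
/- Let G be an undirected simple graph, T ⊆ V(G) a set of terminals, and S ⊆ V(G) \ T a nonempty set. Then the following are equivalent: (1) for every pair of distinct terminals t_i, t_j ∈ T, the graph G−S does not contain two internally vertex-disjoint t_i–t_j paths; (2) for every pair of distinct terminals t_i, t_j ∈ T there exists a vertex v ∈ V(G) \ T such that t_i and t_j lie in different connected components of G−(S ∪ {v}); (3) T is an independent set in G−S and G−S contains no simple cycle passing through at least two vertices of T. -/
open SimpleGraph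

variable {V : Type*}

/-- The graph obtained from `G` by deleting a set `S` of vertices (kept as
isolated vertices; all edges incident to `S` are removed). -/
def SimpleGraph.eraseVerts (G : SimpleGraph V) (S : Set V) : SimpleGraph V where
  Adj u v := G.Adj u v ∧ u ∉ S ∧ v ∉ S
  symm := ⟨fun u v ⟨h, hu, hv⟩ => ⟨h.symm, hv, hu⟩⟩
  loopless := ⟨fun v h => G.loopless.irrefl v h.1⟩

/-- Two walks with the same endpoints are internally vertex-disjoint if they
share no vertex other than their common endpoints. -/
def IntDisjoint {G : SimpleGraph V} {a b : V} (p q : G.Walk a b) : Prop :=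
  ∀ x ∈ p.support, x ∈ q.support → x = a ∨ x = b

/-- There exist two internally vertex-disjoint `a`–`b` paths in `G`
(the two paths may coincide if they have no internal vertices). -/
def TwoIVD (G : SimpleGraph V) (a b : V) : Prop :=
  ∃ p q : G.Walk a b, p.IsPath ∧ q.IsPath ∧ IntDisjoint p q

/-- `S` is a multiway near-separator of `(G, T)`. -/
def IsMWNS (G : SimpleGraph V) (T S : Set V) : Prop :=
  S ⊆ Tᶜ ∧ ∀ t₁ ∈ T, ∀ t₂ ∈ T, t₁ ≠ t₂ → ¬ TwoIVD (G.eraseVerts S) t₁ t₂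

/-- `G` contains a simple cycle through at least two terminals of `T`. -/
def HasTCycle (G : SimpleGraph V) (T : Set V) : Prop :=
  ∃ (v : V) (c : G.Walk v v), c.IsCycle ∧
    ∃ t₁ ∈ T, ∃ t₂ ∈ T, t₁ ≠ t₂ ∧ t₁ ∈ c.support ∧ t₂ ∈ c.support

/-- `v` is a cut vertex of `G`. -/
def IsCutVertex (G : SimpleGraph V) (v : V) : Prop :=
  ∃ a b : V, a ≠ v ∧ b ≠ v ∧ G.Reachable a b ∧ ¬ (G.eraseVerts {v}).Reachable a b

/-- `B` is a block of `G`: a maximal vertex set inducing a connected subgraph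
without a cut vertex. -/
def IsBlock (G : SimpleGraph V) (B : Set V) : Prop :=
  B.Nonempty ∧ (G.induce B).Connected ∧ (∀ v, ¬ IsCutVertex (G.induce B) v) ∧
  ∀ B' : Set V, B ⊆ B' → (G.induce B').Connected →
    (∀ v, ¬ IsCutVertex (G.induce B') v) → B' = B

/-!
Two internally disjoint `a`–`b` paths are either the single edge `ab` or glue to a cycle through
`a` and `b`, and a cycle through `a` and `b` splits at them into two such paths; this gives
(1) ⇔ (3).

(1) ⇔ (2) rests on a local form of Menger's theorem. If there are no two internally disjoint
`a`–`b` paths, let `W` be the set of vertices joined to `a` by two internally disjoint paths and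
follow a path from `a` to `b` up to its first edge `uw` leaving `W`. Then `u` lies on every
`a`–`b` walk: an `a`–`w` walk avoiding `u`, cut at its last vertex on the two paths to `u`, would
put `w` in `W`. A separator of `t₁` and `t₂` nearest to `t₁` is not a terminal `t`, since a
separator of `t₁` from `t` would be nearer. If `t₁` and `t₂` are already disconnected in `G − S`,
any vertex of `S` separates them.
-/

theorem IntDisjoint.symm {G : SimpleGraph V} {a b : V} {p q : G.Walk a b}
    (h : IntDisjoint p q) : IntDisjoint q p :=
  fun x hq hp => h x hp hq

namespace SimpleGraph

variable {G : SimpleGraph V} {A T : Set V} {a b u v w x : V}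

lemma eraseVerts_le (G : SimpleGraph V) (A : Set V) : G.eraseVerts A ≤ G := fun _ _ h => h.1

lemma eraseVerts_eraseVerts (G : SimpleGraph V) (A B : Set V) :
    (G.eraseVerts A).eraseVerts B = G.eraseVerts (A ∪ B) := by
  ext u v
  simp only [eraseVerts, Set.mem_union]
  tauto

lemma Walk.reachable_eraseVerts (q : G.Walk a b) (hq : ∀ x ∈ q.support, x ∉ A) :
    (G.eraseVerts A).Reachable a b := by
  induction q with
  | nil => rfl
  | cons h q ih =>
    simp only [support_cons, List.mem_cons, forall_eq_or_imp] at hq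
    have hadj : (G.eraseVerts A).Adj _ _ := ⟨h, hq.1, hq.2 _ q.start_mem_support⟩
    exact hadj.reachable.trans (ih hq.2)

lemma Walk.notMem_of_mem_support_eraseVerts (q : (G.eraseVerts A).Walk a b) (ha : a ∉ A) :
    ∀ x ∈ q.support, x ∉ A := by
  induction q with
  | nil => simpa
  | cons h q ih =>
    simp only [support_cons, List.mem_cons, forall_eq_or_imp]
    exact ⟨ha, ih h.2.2⟩

lemma not_reachable_eraseVerts_singleton_iff (hav : a ≠ v) :
    ¬ (G.eraseVerts {v}).Reachable a b ↔ ∀ q : G.Walk a b, v ∈ q.support := by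
  refine ⟨fun h q => by_contra fun hv => h (q.reachable_eraseVerts ?_), fun h ⟨q⟩ => ?_⟩
  · rintro x hx rfl
    exact hv hx
  · refine q.notMem_of_mem_support_eraseVerts hav v ?_ rfl
    simpa [Walk.support_mapLe_eq_support] using h (q.mapLe (G.eraseVerts_le _))

lemma Walk.IsPath.start_notMem_support_tail {p : G.Walk u v} (hp : p.IsPath) :
    u ∉ p.support.tail :=
  (List.nodup_cons.mp (p.cons_tail_support ▸ hp.support_nodup)).1

lemma Walk.IsPath.append_of_forall_mem_support {p : G.Walk u v} {q : G.Walk v w}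
    (hp : p.IsPath) (hq : q.IsPath) (h : ∀ x ∈ p.support, x ∈ q.support → x = v) :
    (p.append q).IsPath := by
  rw [isPath_def, support_append]
  refine hp.support_nodup.append hq.support_nodup.tail fun x hxp hxq => ?_
  exact hq.start_notMem_support_tail (h x hxp (List.mem_of_mem_tail hxq) ▸ hxq)

lemma Walk.IsPath.exists_adj_mem_notMem (W : Set V) {p : G.Walk u v} (hp : p.IsPath)
    (hu : u ∈ W) (hv : v ∉ W) :
    ∃ x ∈ W, ∃ y ∉ W, G.Adj x y ∧ ∃ s : G.Walk y v, x ∉ s.support := by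
  induction p with
  | nil => exact absurd hu hv
  | @cons _ y _ h p ih =>
    rw [cons_isPath_iff] at hp
    by_cases hy : y ∈ W
    · exact ih hp.1 hy hv
    · exact ⟨_, hu, y, hy, h, p, hp.2⟩

lemma twoIVD_self (G : SimpleGraph V) (a : V) : TwoIVD G a a :=
  ⟨.nil, .nil, .nil, .nil, fun x hx _ => Or.inl (by simpa using hx)⟩

lemma twoIVD_of_adj (h : G.Adj a b) : TwoIVD G a b :=
  ⟨h.toWalk, h.toWalk, .of_adj h, .of_adj h, fun x hx _ => by simpa using hx⟩

lemma twoIVD_of_isCycle_append {p : G.Walk a b} {q : G.Walk b a} (hab : a ≠ b)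
    (h : (p.append q).IsCycle) : TwoIVD G a b := by
  have hnd := h.support_nodup
  rw [Walk.tail_support_append, List.nodup_append] at hnd
  refine ⟨p, q.reverse, h.isPath_of_append_left (Walk.not_nil_of_ne hab.symm),
    (h.isPath_of_append_right (Walk.not_nil_of_ne hab)).reverse, fun x hxp hxq => ?_⟩
  rw [Walk.support_reverse, List.mem_reverse] at hxq
  rw [← p.cons_tail_support, List.mem_cons] at hxp
  rw [← q.cons_tail_support, List.mem_cons] at hxq
  rcases hxp with rfl | hxp
  · exact Or.inl rfl
  rcases hxq with rfl | hxq
  · exact Or.inr rfl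
  exact absurd rfl (hnd.2.2 x hxp x hxq)

lemma twoIVD_of_isCycle {c : G.Walk v v} (hc : c.IsCycle) (ha : a ∈ c.support)
    (hb : b ∈ c.support) (hab : a ≠ b) : TwoIVD G a b := by
  classical
  have hb' : b ∈ (c.rotate a ha).support := (c.mem_support_rotate_iff a ha).mpr hb
  have hc' := hc.rotate ha
  rw [← (c.rotate a ha).take_spec hb'] at hc'
  exact twoIVD_of_isCycle_append hab hc'

lemma adj_or_exists_isCycle_of_twoIVD (hab : a ≠ b) (h : TwoIVD G a b) :
    G.Adj a b ∨ ∃ (v : V) (c : G.Walk v v), c.IsCycle ∧ a ∈ c.support ∧ b ∈ c.support := by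
  obtain ⟨p, q, hp, hq, hpq⟩ := h
  by_cases hl : 1 < p.length ∨ 1 < q.reverse.length
  · refine Or.inr ⟨a, p.append q.reverse, hp.isCycle_append hq.reverse ?_ hl, by simp, by simp⟩
    intro x hxp hxq
    have hxq' : x ∈ q.support := by
      simpa using List.mem_of_mem_tail hxq
    rcases hpq x (List.mem_of_mem_tail hxp) hxq' with rfl | rfl
    · exact hp.start_notMem_support_tail hxp
    · exact hq.reverse.start_notMem_support_tail hxq
  · rw [not_or, not_lt] at hl
    refine Or.inl (Walk.adj_of_length_eq_one (p := p) ?_)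
    have : p.length ≠ 0 := fun h0 => hab (Walk.eq_of_length_eq_zero h0)
    omega

theorem forall_not_twoIVD_iff_not_adj_and_not_hasTCycle :
    (∀ t₁ ∈ T, ∀ t₂ ∈ T, t₁ ≠ t₂ → ¬ TwoIVD G t₁ t₂) ↔
      (∀ t₁ ∈ T, ∀ t₂ ∈ T, ¬ G.Adj t₁ t₂) ∧ ¬ HasTCycle G T := by
  refine ⟨fun hT => ⟨fun t₁ h₁ t₂ h₂ hadj => hT t₁ h₁ t₂ h₂ hadj.ne (twoIVD_of_adj hadj), ?_⟩, ?_⟩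
  · rintro ⟨v, c, hc, t₁, h₁, t₂, h₂, hne, ht₁, ht₂⟩
    exact hT t₁ h₁ t₂ h₂ hne (twoIVD_of_isCycle hc ht₁ ht₂ hne)
  · rintro ⟨hind, hcyc⟩ t₁ h₁ t₂ h₂ hne htwo
    rcases adj_or_exists_isCycle_of_twoIVD hne htwo with hadj | ⟨v, c, hc, ht₁, ht₂⟩
    · exact hind t₁ h₁ t₂ h₂ hadj
    · exact hcyc ⟨v, c, hc, t₁, h₁, t₂, h₂, hne, ht₁, ht₂⟩

lemma twoIVD_of_detour {P Q : G.Walk a u} (hP : P.IsPath) (hQ : Q.IsPath) (hPQ : IntDisjoint P Q)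
    (huw : G.Adj u w) (hwa : w ≠ a) (hxP : x ∈ P.support) (hxu : x ≠ u) {r : G.Walk x w}
    (hr : r.IsPath) (hrPQ : ∀ y ∈ r.support, y ∈ P.support ∨ y ∈ Q.support → y = x) :
    TwoIVD G a w := by
  classical
  have huP : u ∉ (P.takeUntil x hxP).support :=
    Walk.endpoint_notMem_support_takeUntil hP hxP hxu.symm
  have hwQ : w ∉ Q.support := fun hwQ => by
    obtain rfl := hrPQ w r.end_mem_support (Or.inr hwQ)
    rcases hPQ w hxP hwQ with rfl | rfl
    exacts [hwa rfl, hxu rfl]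
  refine ⟨(P.takeUntil x hxP).append r, Q.concat huw,
    (hP.takeUntil hxP).append_of_forall_mem_support hr fun y hy hyr =>
      hrPQ y hyr (Or.inl (P.support_takeUntil_subset_support hxP hy)),
    hQ.concat hwQ huw, fun y hy₁ hy₂ => ?_⟩
  rw [Walk.mem_support_append_iff] at hy₁
  rw [Walk.support_concat, List.mem_append, List.mem_singleton] at hy₂
  rcases hy₂ with hyQ | rfl
  · rcases hy₁ with hyP | hyr
    · refine (hPQ y (P.support_takeUntil_subset_support hxP hyP) hyQ).imp_right fun hyu => ?_
      exact absurd (hyu ▸ hyP) huP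
    · obtain rfl := hrPQ y hyr (Or.inr hyQ)
      exact Or.inl ((hPQ y hxP hyQ).resolve_right hxu)
  · exact Or.inr rfl

lemma twoIVD_of_twoIVD_of_adj (hu : TwoIVD G a u) (huw : G.Adj u w) (R : G.Walk w a)
    (hR : u ∉ R.support) : TwoIVD G a w := by
  classical
  by_cases hwa : w = a
  · exact hwa ▸ twoIVD_self G a
  obtain ⟨P, Q, hP, hQ, hPQ⟩ := hu
  obtain ⟨x, hxPQ, hxR, hfirst⟩ :=
    R.exists_mem_support_forall_mem_support_imp_eq (P.support ++ Q.support).toFinset ⟨a, by simp⟩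
  have hrPQ : ∀ y ∈ (R.takeUntil x hxR).reverse.bypass.support,
      y ∈ P.support ∨ y ∈ Q.support → y = x := fun y hy hyPQ =>
    hfirst y (by simpa using hyPQ) (by simpa using Walk.support_bypass_subset_support _ hy)
  have hxu : x ≠ u := by
    rintro rfl
    exact hR hxR
  rcases List.mem_append.mp (List.mem_toFinset.mp hxPQ) with hxP | hxQ
  · exact twoIVD_of_detour hP hQ hPQ huw hwa hxP hxu (Walk.bypass_isPath _) hrPQ
  · exact twoIVD_of_detour hQ hP hPQ.symm huw hwa hxQ hxu (Walk.bypass_isPath _)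
      fun y hy hyQP => hrPQ y hy hyQP.symm

theorem exists_forall_mem_support_of_not_twoIVD (hab : ¬ TwoIVD G a b) (hr : G.Reachable a b) :
    ∃ v, v ≠ a ∧ v ≠ b ∧ ∀ q : G.Walk a b, v ∈ q.support := by
  obtain ⟨p, hp⟩ := hr.exists_isPath
  obtain ⟨u, hu, w, hw, huw, s, hus⟩ :=
    hp.exists_adj_mem_notMem {y | TwoIVD G a y} (twoIVD_self G a) hab
  refine ⟨u, ?_, ?_, fun q => by_contra fun huq => ?_⟩
  · rintro rfl
    exact hw (twoIVD_of_adj huw)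
  · rintro rfl
    exact hab hu
  · refine hw (twoIVD_of_twoIVD_of_adj hu huw (s.append q.reverse) ?_)
    simp [Walk.mem_support_append_iff, hus, huq]

lemma dist_lt_dist_of_forall_mem_support (hr : G.Reachable a v) (hwv : w ≠ v)
    (hw : ∀ q : G.Walk a v, w ∈ q.support) : G.dist a w < G.dist a v := by
  classical
  obtain ⟨p, -, hp⟩ := hr.exists_path_of_dist
  calc G.dist a w ≤ (p.takeUntil w (hw p)).length := dist_le _
    _ < p.length := Walk.length_takeUntil_lt_length _ hwv
    _ = G.dist a v := hp

theorem exists_notMem_forall_mem_support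
    (hT : ∀ t₁ ∈ T, ∀ t₂ ∈ T, t₁ ≠ t₂ → ¬ TwoIVD G t₁ t₂) (ha : a ∈ T) (hab : a ≠ b)
    (hr : G.Reachable a b) : ∃ v ∉ T, ∀ q : G.Walk a b, v ∈ q.support := by
  classical
  -- Descend from the trivial separator `b` through separators ever nearer to `a`.
  suffices ∀ n v, G.dist a v = n → v ≠ a → (∀ q : G.Walk a b, v ∈ q.support) →
      ∃ v ∉ T, ∀ q : G.Walk a b, v ∈ q.support from
    this _ b rfl hab.symm fun q => q.end_mem_support
  intro n
  induction n using Nat.strong_induction_on with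
  | _ n ih =>
    rintro v rfl hva hv
    by_cases hvT : v ∈ T
    · have hrv : G.Reachable a v := (hr.some.takeUntil v (hv _)).reachable
      obtain ⟨w, hwa, hwv, hw⟩ :=
        exists_forall_mem_support_of_not_twoIVD (hT a ha v hvT hva.symm) hrv
      exact ih _ (dist_lt_dist_of_forall_mem_support hrv hwv hw) w rfl hwa
        fun q => q.support_takeUntil_subset_support (hv q) (hw _)
    · exact ⟨v, hvT, hv⟩

theorem forall_not_twoIVD_iff_forall_exists_separator :
    (∀ t₁ ∈ T, ∀ t₂ ∈ T, t₁ ≠ t₂ → ¬ TwoIVD G t₁ t₂) ↔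
      ∀ t₁ ∈ T, ∀ t₂ ∈ T, t₁ ≠ t₂ → G.Reachable t₁ t₂ →
        ∃ v ∉ T, ∀ q : G.Walk t₁ t₂, v ∈ q.support := by
  refine ⟨fun hT t₁ h₁ _ _ hne => exists_notMem_forall_mem_support hT h₁ hne,
    fun hT t₁ h₁ t₂ h₂ hne ⟨p, q, _, _, hpq⟩ => ?_⟩
  obtain ⟨v, hvT, hv⟩ := hT t₁ h₁ t₂ h₂ hne p.reachable
  rcases hpq v (hv p) (hv q) with rfl | rfl
  exacts [hvT h₁, hvT h₂]

end SimpleGraph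

theorem stmt0 (G : SimpleGraph V) (T S : Set V) (hS : S.Nonempty) (hST : S ⊆ Tᶜ) :
    ((∀ t₁ ∈ T, ∀ t₂ ∈ T, t₁ ≠ t₂ → ¬ TwoIVD (G.eraseVerts S) t₁ t₂) ↔
      (∀ t₁ ∈ T, ∀ t₂ ∈ T, t₁ ≠ t₂ →
        ∃ v ∈ Tᶜ, ¬ (G.eraseVerts (S ∪ {v})).Reachable t₁ t₂))
    ∧ ((∀ t₁ ∈ T, ∀ t₂ ∈ T, t₁ ≠ t₂ → ¬ TwoIVD (G.eraseVerts S) t₁ t₂) ↔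
      ((∀ t₁ ∈ T, ∀ t₂ ∈ T, ¬ (G.eraseVerts S).Adj t₁ t₂) ∧
        ¬ HasTCycle (G.eraseVerts S) T)) := by
  refine ⟨?_, forall_not_twoIVD_iff_not_adj_and_not_hasTCycle⟩
  rw [forall_not_twoIVD_iff_forall_exists_separator]
  refine forall₂_congr fun t₁ h₁ => forall₂_congr fun t₂ _ => forall_congr' fun _ => ?_
  simp_rw [← eraseVerts_eraseVerts]
  constructor
  · intro h
    by_cases hr : (G.eraseVerts S).Reachable t₁ t₂
    · obtain ⟨v, hvT, hv⟩ := h hr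
      exact ⟨v, hvT, (not_reachable_eraseVerts_singleton_iff (ne_of_mem_of_not_mem h₁ hvT)).mpr hv⟩
    · obtain ⟨s, hs⟩ := hS
      exact ⟨s, hST hs, fun hr' => hr (hr'.mono (eraseVerts_le _ _))⟩
  · rintro ⟨v, hvT, hv⟩ -
    exact ⟨v, hvT, (not_reachable_eraseVerts_singleton_iff (ne_of_mem_of_not_mem h₁ hvT)).mp hv⟩
end

section
/- Let G be a graph, T ⊆ V(G), x ∈ V(G) \ T, and suppose G contains ℓ cycles C_1, …, C_ℓ, each passing through x and containing at least two terminals of T, such that any two of the cycles intersect only in vertices of T ∪ {x}. Then every multiway near-separator S of (G,T) with x ∉ S satisfies |S| ≥ ℓ. -/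
open SimpleGraph

variable {V : Type*}

/-!
A separator avoiding `x` must meet every cycle `C_i`, since otherwise `C_i` survives in `G - S`
and its two arcs between two of its terminals are internally disjoint terminal paths.
A vertex of `S` lies outside `T ∪ {x}`, hence on at most one `C_i`, so picking one such
vertex per cycle is injective.
-/

namespace SimpleGraph.Walk

variable {G : SimpleGraph V}

lemma IsCycle.intDisjoint_takeUntil_reverse_dropUntil [DecidableEq V] {a b : V}
    {c : G.Walk a a} (hc : c.IsCycle) (hb : b ∈ c.support) :
    IntDisjoint (c.takeUntil b hb) (c.dropUntil b hb).reverse := by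
  intro y hy hy'
  by_contra! hyab
  rw [support_reverse, List.mem_reverse] at hy'
  have hnodup := hc.support_nodup
  rw [← c.take_spec hb, tail_support_append, List.nodup_append] at hnodup
  exact hnodup.2.2 y (((mem_support_iff _).1 hy).resolve_left hyab.1)
    y (((mem_support_iff _).1 hy').resolve_left hyab.2) rfl

lemma IsCycle.twoIVD {u t₁ t₂ : V} {c : G.Walk u u} (hc : c.IsCycle)
    (h₁ : t₁ ∈ c.support) (h₂ : t₂ ∈ c.support) (hne : t₁ ≠ t₂) : TwoIVD G t₁ t₂ := by
  classical
  set c' := c.rotate t₁ h₁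
  have hc' : c'.IsCycle := hc.rotate h₁
  have h₂' : t₂ ∈ c'.support := (c.mem_support_rotate_iff t₁ h₁).2 h₂
  have hdrop : (c'.dropUntil t₂ h₂').IsPath :=
    IsCycle.isPath_of_append_right (p := c'.takeUntil t₂ h₂') (not_nil_of_ne hne)
      (by rwa [c'.take_spec h₂'])
  exact ⟨_, _, hc'.isPath_takeUntil h₂', hdrop.reverse,
    hc'.intDisjoint_takeUntil_reverse_dropUntil h₂'⟩

end SimpleGraph.Walk

lemma IsMWNS.not_hasTCycle {G : SimpleGraph V} {T S : Set V} (hS : IsMWNS G T S) :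
    ¬ HasTCycle (G.eraseVerts S) T := by
  rintro ⟨v, c, hc, t₁, ht₁, t₂, ht₂, hne, h₁, h₂⟩
  exact hS.2 t₁ ht₁ t₂ ht₂ hne (hc.twoIVD h₁ h₂ hne)

lemma hasTCycle_eraseVerts {G : SimpleGraph V} {T S : Set V} {u : V} {c : G.Walk u u}
    (hc : c.IsCycle)
    (hT : ∃ t₁ ∈ T, ∃ t₂ ∈ T, t₁ ≠ t₂ ∧ t₁ ∈ c.support ∧ t₂ ∈ c.support)
    (hS : ∀ v ∈ c.support, v ∉ S) : HasTCycle (G.eraseVerts S) T := by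
  have hedges : ∀ e ∈ c.edges, e ∈ (G.eraseVerts S).edgeSet := by
    intro e he
    induction e using Sym2.ind with
    | _ a b =>
      exact ⟨c.adj_of_mem_edges he, hS a (c.fst_mem_support_of_mem_edges he),
        hS b (c.snd_mem_support_of_mem_edges he)⟩
  refine ⟨u, c.transfer _ hedges, hc.transfer hedges, ?_⟩
  simpa only [Walk.support_transfer] using hT

lemma IsMWNS.exists_mem_support_of_isCycle {G : SimpleGraph V} {T S : Set V}
    (hS : IsMWNS G T S) {u : V} {c : G.Walk u u} (hc : c.IsCycle)
    (hT : ∃ t₁ ∈ T, ∃ t₂ ∈ T, t₁ ≠ t₂ ∧ t₁ ∈ c.support ∧ t₂ ∈ c.support) :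
    ∃ s ∈ S, s ∈ c.support := by
  by_contra! hcS
  exact hS.not_hasTCycle (hasTCycle_eraseVerts hc hT fun v hv hvS => hcS v hvS hv)

theorem stmt9_general [Fintype V] (G : SimpleGraph V) (T : Set V) (x : V)
    (ℓ : ℕ) (c : Fin ℓ → G.Walk x x)
    (hcyc : ∀ i, (c i).IsCycle)
    (hterm : ∀ i, ∃ t₁ ∈ T, ∃ t₂ ∈ T, t₁ ≠ t₂ ∧
      t₁ ∈ (c i).support ∧ t₂ ∈ (c i).support)
    (hdisj : ∀ i j, i ≠ j → ∀ v, v ∈ (c i).support → v ∈ (c j).support →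
      v ∈ T ∪ {x})
    (S : Set V) (hS : IsMWNS G T S) (hxS : x ∉ S) :
    ℓ ≤ S.ncard := by
  choose f hfS hfc using fun i => hS.exists_mem_support_of_isCycle (hcyc i) (hterm i)
  have hf : Set.InjOn f Set.univ := by
    intro i _ j _ hij
    by_contra hne
    rcases hdisj i j hne (f i) (hfc i) (hij ▸ hfc j) with hT | rfl
    · exact hS.1 (hfS i) hT
    · exact hxS (hfS i)
  simpa using Set.ncard_le_ncard_of_injOn f (fun i _ => hfS i) hf

theorem stmt9 [Fintype V] (G : SimpleGraph V) (T : Set V) (x : V) (hx : x ∉ T)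
    (ℓ : ℕ) (c : Fin ℓ → G.Walk x x)
    (hcyc : ∀ i, (c i).IsCycle)
    (hterm : ∀ i, ∃ t₁ ∈ T, ∃ t₂ ∈ T, t₁ ≠ t₂ ∧
      t₁ ∈ (c i).support ∧ t₂ ∈ (c i).support)
    (hdisj : ∀ i j, i ≠ j → ∀ v, v ∈ (c i).support → v ∈ (c j).support →
      v ∈ T ∪ {x})
    (S : Set V) (hS : IsMWNS G T S) (hxS : x ∉ S) :
    ℓ ≤ S.ncard :=
  stmt9_general G T x ℓ c hcyc hterm hdisj S hS hxS
end
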